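/- Let k ≥ 1 and let n be an integer with 2^{2k-1} - 1 ≤ n ≤ 2^{2k} - 1. Then S(n) ≤ 2^k, and S(n) = 2^k if and only if n = 2^{2k} - 1 - ∑_{r=0}^{k-2} ε_r·(3·2^{2r+1}) - β for some choice of ε_r ∈ {0,1} (for 0 ≤ r ≤ k-2) and β ∈ {0,2}. -/

import Mathlib

/-- `inv2 n` is the number of inversions in the binary representation of `n`,
i.e. the number of pairs of bit positions `a > b` such that bit `a` of `n` is `1`
and bit `b` of `n` is `0`. -/
def inv2 (n : ℕ) : ℕ :=
  ((Finset.range (n + 1) ×ˢ Finset.range (n + 1)).filter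
    (fun p => p.2 < p.1 ∧ n.testBit p.1 = true ∧ n.testBit p.2 = false)).card

/-- `iSeq n = (-1)^(inv2 n)`. -/
def iSeq (n : ℕ) : ℤ := (-1) ^ inv2 n


/-- The summatory function `S N = ∑_{0 ≤ n ≤ N} iSeq n`. -/
def S (N : ℕ) : ℤ := ∑ n ∈ Finset.range (N + 1), iSeq n


/-- An integer `n` is of the special form for `k ≥ 1` if
`n = 2^(2k) - 1 - ∑_{r=0}^{k-2} ε_r (3 ⬝ 2^(2r+1)) - β` for some choice of
`ε_r ∈ {0,1}` and `β ∈ {0,2}`. -/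
def IsSpecialForm (k : ℕ) (n : ℤ) : Prop :=
  ∃ ε : ℕ → ℤ, (∀ r, ε r = 0 ∨ ε r = 1) ∧
    ∃ β : ℤ, (β = 0 ∨ β = 2) ∧
      n = 2 ^ (2 * k) - 1 - (∑ r ∈ Finset.range (k - 1), ε r * (3 * 2 ^ (2 * r + 1))) - β

/-!
Writing `i n = (-1) ^ inv2 n` and `t n = (-1) ^ (number of ones of n)` (the Thue–Morse sign), one
has `i (2n+1) = i n` and `i (2n) = t n * i n`. Grouping four consecutive terms gives
`S (4N+3) = 2 S N`, and more generally `S (4N+r) ≤ 2 S N + 1 - i N`, so `n ↦ n / 4`, which maps the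
interval `2·4^k ≤ n+1 ≤ 4^(k+1)` onto the previous one, at most doubles the maximum there, provided
`i = 1` at the maxima. An induction on `k` then shows the bound and locates the maxima: they come in
pairs `a, a+2` (with `S (a+1) = S a - 1`), and the pair at level `k+1` arises either from a pair at
level `k` or from a point `a+1` in between, where `i = t = -1`. The resulting recursion
`a ↦ 4a+3, 4a+9` for the lower maxima unrolls to the special form.
-/

open Finset

def inversionCount (n M : ℕ) : ℕ :=
  #{p ∈ range M ×ˢ range M | p.2 < p.1 ∧ n.testBit p.1 = true ∧ n.testBit p.2 = false}

lemma lt_of_testBit_of_lt_two_pow {n M j : ℕ} (hj : n.testBit j = true) (hn : n < 2 ^ M) :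
    j < M :=
  (Nat.pow_lt_pow_iff_right (by norm_num)).1 ((Nat.ge_two_pow_of_testBit hj).trans_lt hn)

lemma lt_two_pow_succ_self (n : ℕ) : n < 2 ^ (n + 1) :=
  n.lt_two_pow_self.trans (Nat.pow_lt_pow_right (by norm_num) n.lt_succ_self)

lemma inversionCount_eq_inv2 {n M : ℕ} (hn : n < 2 ^ M) : inversionCount n M = inv2 n := by
  unfold inversionCount inv2
  congr 1
  ext ⟨a, b⟩
  simp only [mem_filter, mem_product, mem_range]
  constructor
  · rintro ⟨-, hba, ha, hb⟩
    have := lt_of_testBit_of_lt_two_pow ha (lt_two_pow_succ_self n)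
    exact ⟨⟨this, by omega⟩, hba, ha, hb⟩
  · rintro ⟨-, hba, ha, hb⟩
    have := lt_of_testBit_of_lt_two_pow ha hn
    exact ⟨⟨this, by omega⟩, hba, ha, hb⟩

lemma inversionCount_bit_succ (b : Bool) (n M : ℕ) :
    inversionCount (Nat.bit b n) (M + 1) =
      inversionCount n M + if b then 0 else #{j ∈ range M | n.testBit j = true} := by
  simp only [inversionCount, card_filter, sum_product]
  rw [sum_range_succ']
  simp only [sum_range_succ']
  cases b <;> simp [Nat.testBit_add_one, sum_add_distrib, Nat.mul_add_div]

lemma card_filter_testBit_eq_length_bitIndices {n M : ℕ} (hn : n < 2 ^ M) :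
    #{j ∈ range M | n.testBit j = true} = n.bitIndices.length := by
  rw [← List.toFinset_card_of_nodup Nat.bitIndices_nodup]
  congr 1
  ext j
  simpa using fun hj => lt_of_testBit_of_lt_two_pow hj hn

lemma inv2_bit (b : Bool) (n : ℕ) :
    inv2 (Nat.bit b n) = inv2 n + if b then 0 else n.bitIndices.length := by
  have hn := lt_two_pow_succ_self n
  rw [← inversionCount_eq_inv2 (Nat.bit_lt_two_pow_succ_iff.2 hn), inversionCount_bit_succ,
    inversionCount_eq_inv2 hn, card_filter_testBit_eq_length_bitIndices hn]

def thueMorse (n : ℕ) : ℤ := (-1) ^ n.bitIndices.length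

lemma iSeq_two_mul_add_one (n : ℕ) : iSeq (2 * n + 1) = iSeq n := by
  simpa [iSeq] using congrArg ((-1 : ℤ) ^ ·) (inv2_bit true n)

lemma iSeq_two_mul (n : ℕ) : iSeq (2 * n) = thueMorse n * iSeq n := by
  simpa [iSeq, thueMorse, pow_add, mul_comm] using congrArg ((-1 : ℤ) ^ ·) (inv2_bit false n)

lemma thueMorse_two_mul (n : ℕ) : thueMorse (2 * n) = thueMorse n := by
  simp [thueMorse]

lemma thueMorse_two_mul_add_one (n : ℕ) : thueMorse (2 * n + 1) = -thueMorse n := by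
  simp [thueMorse, pow_succ]

lemma iSeq_eq_one_or_eq_neg_one (n : ℕ) : iSeq n = 1 ∨ iSeq n = -1 := neg_one_pow_eq_or ℤ _

lemma thueMorse_eq_one_or_eq_neg_one (n : ℕ) : thueMorse n = 1 ∨ thueMorse n = -1 :=
  neg_one_pow_eq_or ℤ _

lemma thueMorse_mul_self (n : ℕ) : thueMorse n * thueMorse n = 1 := by
  rw [thueMorse, ← mul_pow]; simp

lemma iSeq_four_mul (N : ℕ) : iSeq (4 * N) = iSeq N := by
  rw [show 4 * N = 2 * (2 * N) by ring, iSeq_two_mul, iSeq_two_mul, thueMorse_two_mul, ← mul_assoc,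
    thueMorse_mul_self, one_mul]

lemma iSeq_four_mul_add_one (N : ℕ) : iSeq (4 * N + 1) = thueMorse N * iSeq N := by
  rw [show 4 * N + 1 = 2 * (2 * N) + 1 by ring, iSeq_two_mul_add_one, iSeq_two_mul]

lemma iSeq_four_mul_add_two (N : ℕ) : iSeq (4 * N + 2) = -(thueMorse N * iSeq N) := by
  rw [show 4 * N + 2 = 2 * (2 * N + 1) by ring, iSeq_two_mul, thueMorse_two_mul_add_one,
    iSeq_two_mul_add_one, neg_mul]

lemma iSeq_four_mul_add_three (N : ℕ) : iSeq (4 * N + 3) = iSeq N := by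
  rw [show 4 * N + 3 = 2 * (2 * N + 1) + 1 by ring, iSeq_two_mul_add_one, iSeq_two_mul_add_one]

lemma thueMorse_four_mul (N : ℕ) : thueMorse (4 * N) = thueMorse N := by
  rw [show 4 * N = 2 * (2 * N) by ring, thueMorse_two_mul, thueMorse_two_mul]

lemma thueMorse_four_mul_add_one (N : ℕ) : thueMorse (4 * N + 1) = -thueMorse N := by
  rw [show 4 * N + 1 = 2 * (2 * N) + 1 by ring, thueMorse_two_mul_add_one, thueMorse_two_mul]

lemma thueMorse_four_mul_add_two (N : ℕ) : thueMorse (4 * N + 2) = -thueMorse N := by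
  rw [show 4 * N + 2 = 2 * (2 * N + 1) by ring, thueMorse_two_mul, thueMorse_two_mul_add_one]

lemma thueMorse_four_mul_add_three (N : ℕ) : thueMorse (4 * N + 3) = thueMorse N := by
  rw [show 4 * N + 3 = 2 * (2 * N + 1) + 1 by ring, thueMorse_two_mul_add_one,
    thueMorse_two_mul_add_one, neg_neg]

lemma S_succ (N : ℕ) : S (N + 1) = S N + iSeq (N + 1) := sum_range_succ _ _

lemma S_four_mul_add_three (N : ℕ) : S (4 * N + 3) = 2 * S N := by
  induction N with
  | zero => decide
  | succ N ih =>
    -- the four signs `iSeq (4N + 4), …, iSeq (4N + 7)` are `i, t i, -t i, i` with `i = iSeq (N + 1)`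
    rw [show 4 * (N + 1) + 3 = 4 * N + 3 + 1 + 1 + 1 + 1 by ring, S_succ, S_succ, S_succ, S_succ,
      ih, S_succ, show 4 * N + 3 + 1 + 1 + 1 + 1 = 4 * (N + 1) + 3 by ring,
      show 4 * N + 3 + 1 + 1 + 1 = 4 * (N + 1) + 2 by ring,
      show 4 * N + 3 + 1 + 1 = 4 * (N + 1) + 1 by ring, show 4 * N + 3 + 1 = 4 * (N + 1) by ring,
      iSeq_four_mul, iSeq_four_mul_add_one, iSeq_four_mul_add_two, iSeq_four_mul_add_three]
    ring

lemma S_four_mul_add_two (N : ℕ) : S (4 * N + 2) = 2 * S N - iSeq N := by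
  have := S_succ (4 * N + 2)
  rw [S_four_mul_add_three, iSeq_four_mul_add_three] at this
  linarith

lemma S_four_mul_add_one (N : ℕ) : S (4 * N + 1) = 2 * S N - iSeq N + thueMorse N * iSeq N := by
  have := S_succ (4 * N + 1)
  rw [S_four_mul_add_two, iSeq_four_mul_add_two] at this
  linarith

lemma S_four_mul (N : ℕ) : S (4 * N) = 2 * S N - iSeq N := by
  have := S_succ (4 * N)
  rw [S_four_mul_add_one, iSeq_four_mul_add_one] at this
  linarith

lemma S_four_mul_add_le {r : ℕ} (hr : r < 4) (N : ℕ) : S (4 * N + r) ≤ 2 * S N + 1 - iSeq N := by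
  interval_cases r <;>
  rcases iSeq_eq_one_or_eq_neg_one N with hi | hi <;>
  rcases thueMorse_eq_one_or_eq_neg_one N with ht | ht <;>
  simp [S_four_mul, S_four_mul_add_one, S_four_mul_add_two, S_four_mul_add_three, hi, ht] <;> omega

lemma S_four_mul_add_eq_iff {r : ℕ} (hr : r < 4) (N : ℕ) :
    S (4 * N + r) = 2 * S N + 1 - iSeq N ↔
      r = 1 ∧ thueMorse N = iSeq N ∨ r = 3 ∧ iSeq N = 1 := by
  interval_cases r <;>
  rcases iSeq_eq_one_or_eq_neg_one N with hi | hi <;>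
  rcases thueMorse_eq_one_or_eq_neg_one N with ht | ht <;>
  simp [S_four_mul, S_four_mul_add_one, S_four_mul_add_two, S_four_mul_add_three, hi, ht] <;> omega

/-- Level `k` is level `k + 1` of the theorem: the maxima of `S` on `2·4^k ≤ n + 1 ≤ 4^(k+1)`
are the points `a` and `a + 2` with `IsPeak k a`. -/
def IsPeak : ℕ → ℕ → Prop
  | 0, a => a = 1
  | k + 1, a => ∃ b, IsPeak k b ∧ (a = 4 * b + 3 ∨ a = 4 * b + 9)

structure PeakProfile (k a : ℕ) : Prop where
  S_eq : S a = 2 ^ (k + 1)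
  iSeq_eq : iSeq a = 1
  thueMorse_eq : thueMorse a = -1
  iSeq_add_one : iSeq (a + 1) = -1
  thueMorse_add_one : thueMorse (a + 1) = -1
  iSeq_add_two : iSeq (a + 2) = 1
  thueMorse_add_two : thueMorse (a + 2) = 1

namespace PeakProfile

variable {k a : ℕ}

lemma S_add_one (h : PeakProfile k a) : S (a + 1) = 2 ^ (k + 1) - 1 := by
  rw [S_succ, h.S_eq, h.iSeq_add_one]; ring

lemma S_add_two (h : PeakProfile k a) : S (a + 2) = 2 ^ (k + 1) := by
  rw [S_succ, S_add_one h, h.iSeq_add_two]; ring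

lemma four_mul_add_three (h : PeakProfile k a) : PeakProfile (k + 1) (4 * a + 3) where
  S_eq := by rw [S_four_mul_add_three, h.S_eq]; ring
  iSeq_eq := by rw [iSeq_four_mul_add_three, h.iSeq_eq]
  thueMorse_eq := by rw [thueMorse_four_mul_add_three, h.thueMorse_eq]
  iSeq_add_one := by rw [show 4 * a + 3 + 1 = 4 * (a + 1) by ring, iSeq_four_mul, h.iSeq_add_one]
  thueMorse_add_one := by
    rw [show 4 * a + 3 + 1 = 4 * (a + 1) by ring, thueMorse_four_mul, h.thueMorse_add_one]
  iSeq_add_two := by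
    rw [show 4 * a + 3 + 2 = 4 * (a + 1) + 1 by ring, iSeq_four_mul_add_one, h.iSeq_add_one,
      h.thueMorse_add_one]; norm_num
  thueMorse_add_two := by
    rw [show 4 * a + 3 + 2 = 4 * (a + 1) + 1 by ring, thueMorse_four_mul_add_one,
      h.thueMorse_add_one]; norm_num

lemma four_mul_add_nine (h : PeakProfile k a) : PeakProfile (k + 1) (4 * a + 9) where
  S_eq := by
    rw [show 4 * a + 9 = 4 * (a + 2) + 1 by ring, S_four_mul_add_one, S_add_two h, h.iSeq_add_two,
      h.thueMorse_add_two]; ring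
  iSeq_eq := by
    rw [show 4 * a + 9 = 4 * (a + 2) + 1 by ring, iSeq_four_mul_add_one, h.iSeq_add_two,
      h.thueMorse_add_two]; norm_num
  thueMorse_eq := by
    rw [show 4 * a + 9 = 4 * (a + 2) + 1 by ring, thueMorse_four_mul_add_one, h.thueMorse_add_two]
  iSeq_add_one := by
    rw [show 4 * a + 9 + 1 = 4 * (a + 2) + 2 by ring, iSeq_four_mul_add_two, h.iSeq_add_two,
      h.thueMorse_add_two]; norm_num
  thueMorse_add_one := by
    rw [show 4 * a + 9 + 1 = 4 * (a + 2) + 2 by ring, thueMorse_four_mul_add_two,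
      h.thueMorse_add_two]
  iSeq_add_two := by
    rw [show 4 * a + 9 + 2 = 4 * (a + 2) + 3 by ring, iSeq_four_mul_add_three, h.iSeq_add_two]
  thueMorse_add_two := by
    rw [show 4 * a + 9 + 2 = 4 * (a + 2) + 3 by ring, thueMorse_four_mul_add_three,
      h.thueMorse_add_two]

end PeakProfile

lemma IsPeak.peakProfile {k a : ℕ} (h : IsPeak k a) : PeakProfile k a := by
  induction k generalizing a with
  | zero =>
    obtain rfl : a = 1 := h
    constructor <;> decide
  | succ k ih =>
    obtain ⟨b, hb, rfl | rfl⟩ := h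
    exacts [(ih hb).four_mul_add_three, (ih hb).four_mul_add_nine]

/-- The last field records the near-maxima that produce maxima at the next level, through
`S (4N + 1) = 2 S N + 2` when `iSeq N = thueMorse N = -1`. -/
structure SummatoryBound (k n : ℕ) : Prop where
  le : S n ≤ 2 ^ (k + 1)
  exists_peak_of_eq : S n = 2 ^ (k + 1) → ∃ a, IsPeak k a ∧ (n = a ∨ n = a + 2)
  exists_peak_of_add_one_eq : S n + 1 = 2 ^ (k + 1) → iSeq n = -1 → thueMorse n = -1 →
    ∃ a, IsPeak k a ∧ n = a + 1

namespace SummatoryBound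

variable {k N : ℕ}

lemma iSeq_eq_one (h : SummatoryBound k N) (hS : S N = 2 ^ (k + 1)) : iSeq N = 1 := by
  obtain ⟨a, ha, rfl | rfl⟩ := h.exists_peak_of_eq hS
  exacts [ha.peakProfile.iSeq_eq, ha.peakProfile.iSeq_add_two]

lemma two_mul_S_add_one_sub_iSeq_le (h : SummatoryBound k N) :
    2 * S N + 1 - iSeq N ≤ 2 ^ (k + 2) := by
  rw [pow_succ]
  rcases iSeq_eq_one_or_eq_neg_one N with hi | hi
  · linarith [h.le]
  · have : S N ≠ 2 ^ (k + 1) := fun hS => by simp [h.iSeq_eq_one hS] at hi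
    have := h.le
    omega

lemma exists_peak_of_four_mul_add_eq (h : SummatoryBound k N) {r : ℕ} (hr : r < 4)
    (hS : S (4 * N + r) = 2 ^ (k + 2)) :
    ∃ a, IsPeak (k + 1) a ∧ (4 * N + r = a ∨ 4 * N + r = a + 2) := by
  have hle := S_four_mul_add_le hr N
  have hbound := h.two_mul_S_add_one_sub_iSeq_le
  have hpow : (2 : ℤ) ^ (k + 2) = 2 * 2 ^ (k + 1) := by ring
  obtain ⟨rfl, ht⟩ | ⟨rfl, hi⟩ := (S_four_mul_add_eq_iff hr N).1 (by linarith)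
  · rcases iSeq_eq_one_or_eq_neg_one N with hi | hi
    · obtain ⟨a, ha, rfl | rfl⟩ := h.exists_peak_of_eq (by linarith)
      · linarith [ha.peakProfile.thueMorse_eq]
      · exact ⟨4 * a + 9, ⟨a, ha, Or.inr rfl⟩, Or.inl (by ring)⟩
    · obtain ⟨a, ha, rfl⟩ := h.exists_peak_of_add_one_eq (by linarith) hi (ht.trans hi)
      exact ⟨4 * a + 3, ⟨a, ha, Or.inl rfl⟩, Or.inr (by ring)⟩
  · obtain ⟨a, ha, hN | rfl⟩ := h.exists_peak_of_eq (by linarith)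
    · subst N
      exact ⟨4 * a + 3, ⟨a, ha, Or.inl rfl⟩, Or.inl rfl⟩
    · exact ⟨4 * a + 9, ⟨a, ha, Or.inr rfl⟩, Or.inr (by ring)⟩

lemma exists_peak_of_four_mul_add_add_one_eq (h : SummatoryBound k N) {r : ℕ} (hr : r < 4)
    (hS : S (4 * N + r) + 1 = 2 ^ (k + 2)) (hi : iSeq (4 * N + r) = -1)
    (ht : thueMorse (4 * N + r) = -1) : ∃ a, IsPeak (k + 1) a ∧ 4 * N + r = a + 1 := by
  have hpow : (2 : ℤ) ^ (k + 2) = 2 * 2 ^ (k + 1) := by ring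
  interval_cases r
  · simp only [add_zero, S_four_mul, iSeq_four_mul, thueMorse_four_mul] at hS hi ht ⊢
    obtain ⟨a, ha, rfl⟩ := h.exists_peak_of_add_one_eq (by linarith) hi ht
    exact ⟨4 * a + 3, ⟨a, ha, Or.inl rfl⟩, by ring⟩
  · simp only [S_four_mul_add_one, iSeq_four_mul_add_one, thueMorse_four_mul_add_one,
      neg_inj] at hS hi ht
    rw [ht, one_mul] at hi
    rw [ht, hi] at hS
    omega
  · simp only [S_four_mul_add_two, iSeq_four_mul_add_two, thueMorse_four_mul_add_two,
      neg_inj] at hS hi ht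
    rw [ht, one_mul] at hi
    obtain ⟨a, ha, rfl | rfl⟩ := h.exists_peak_of_eq (by linarith)
    · linarith [ha.peakProfile.thueMorse_eq]
    · exact ⟨4 * a + 9, ⟨a, ha, Or.inr rfl⟩, by ring⟩
  · rw [S_four_mul_add_three] at hS
    omega

lemma four_mul_add (h : SummatoryBound k N) {r : ℕ} (hr : r < 4) :
    SummatoryBound (k + 1) (4 * N + r) where
  le := (S_four_mul_add_le hr N).trans h.two_mul_S_add_one_sub_iSeq_le
  exists_peak_of_eq := h.exists_peak_of_four_mul_add_eq hr
  exists_peak_of_add_one_eq := h.exists_peak_of_four_mul_add_add_one_eq hr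

end SummatoryBound

lemma summatoryBound_zero {n : ℕ} (h₁ : 2 ≤ n + 1) (h₂ : n + 1 ≤ 4) : SummatoryBound 0 n := by
  have h1 : IsPeak 0 1 := rfl
  obtain rfl | rfl | rfl : n = 1 ∨ n = 2 ∨ n = 3 := by omega
  · exact ⟨by decide, fun _ => ⟨1, h1, Or.inl rfl⟩, fun h => absurd h (by decide)⟩
  · exact ⟨by decide, fun h => absurd h (by decide), fun _ _ _ => ⟨1, h1, rfl⟩⟩
  · exact ⟨by decide, fun _ => ⟨1, h1, Or.inr rfl⟩, fun h => absurd h (by decide)⟩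

theorem summatoryBound {k n : ℕ} (h₁ : 2 * 4 ^ k ≤ n + 1) (h₂ : n + 1 ≤ 4 ^ (k + 1)) :
    SummatoryBound k n := by
  induction k generalizing n with
  | zero => exact summatoryBound_zero (by simpa using h₁) (by simpa using h₂)
  | succ k ih =>
    rw [← Nat.div_add_mod n 4]
    rw [pow_succ] at h₁ h₂
    exact (ih (by omega) (by rw [pow_succ]; omega)).four_mul_add (Nat.mod_lt n (by norm_num))

def peakValue (k : ℕ) (ε : ℕ → ℤ) : ℤ := 4 ^ (k + 1) - 3 - ∑ r ∈ range k, ε r * (6 * 4 ^ r)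

lemma peakValue_zero (ε : ℕ → ℤ) : peakValue 0 ε = 1 := by norm_num [peakValue]

lemma peakValue_succ (k : ℕ) (ε : ℕ → ℤ) :
    peakValue (k + 1) ε = 4 * peakValue k (fun r => ε (r + 1)) + 9 - 6 * ε 0 := by
  rw [peakValue, peakValue, sum_range_succ', mul_sub, mul_sub, mul_sum]
  simp only [pow_succ]
  ring_nf

lemma peakValue_pos (k : ℕ) {ε : ℕ → ℤ} (hε : ∀ r, ε r = 0 ∨ ε r = 1) : 0 < peakValue k ε := by
  induction k generalizing ε with
  | zero => rw [peakValue_zero]; norm_num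
  | succ k ih =>
    rw [peakValue_succ]
    have := ih fun r => hε (r + 1)
    rcases hε 0 with h | h <;> linarith

lemma isPeak_iff_exists_peakValue (k a : ℕ) :
    IsPeak k a ↔ ∃ ε : ℕ → ℤ, (∀ r, ε r = 0 ∨ ε r = 1) ∧ (a : ℤ) = peakValue k ε := by
  induction k generalizing a with
  | zero =>
    simp only [IsPeak, peakValue_zero, Nat.cast_eq_one]
    exact ⟨fun h => ⟨fun _ => 0, by simp, h⟩, fun ⟨_, _, h⟩ => h⟩
  | succ k ih =>
    constructor
    · rintro ⟨b, hb, hab⟩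
      obtain ⟨ε, hε, hb⟩ := (ih b).1 hb
      -- the lowest digit `e` records which of the branches `4b + 3`, `4b + 9` was taken
      have extend (e : ℤ) (he : e = 0 ∨ e = 1) (ha : (a : ℤ) = 4 * b + 9 - 6 * e) :
          ∃ ε' : ℕ → ℤ, (∀ r, ε' r = 0 ∨ ε' r = 1) ∧ (a : ℤ) = peakValue (k + 1) ε' :=
        ⟨fun | 0 => e | r + 1 => ε r, fun | 0 => he | r + 1 => hε r,
          by rw [peakValue_succ, ha, hb]⟩
      rcases hab with rfl | rfl
      exacts [extend 1 (by simp) (by push_cast; ring), extend 0 (by simp) (by push_cast; ring)]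
    · rintro ⟨ε, hε, ha⟩
      obtain ⟨b, hb⟩ := Int.eq_ofNat_of_zero_le (peakValue_pos k fun r => hε (r + 1)).le
      refine ⟨b, (ih b).2 ⟨_, fun r => hε (r + 1), hb.symm⟩, ?_⟩
      rw [peakValue_succ, hb] at ha
      rcases hε 0 with h | h <;> rw [h] at ha <;> omega

lemma isSpecialForm_iff (k n : ℕ) :
    IsSpecialForm (k + 1) n ↔ ∃ a, IsPeak k a ∧ (n = a ∨ n = a + 2) := by
  have hform (ε : ℕ → ℤ) : (2 : ℤ) ^ (2 * (k + 1)) - 1 -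
      ∑ r ∈ range (k + 1 - 1), ε r * (3 * 2 ^ (2 * r + 1)) = peakValue k ε + 2 := by
    simp only [peakValue, Nat.add_sub_cancel, pow_succ, pow_mul]
    ring_nf
  simp only [IsSpecialForm, hform, isPeak_iff_exists_peakValue]
  constructor
  · rintro ⟨ε, hε, β, hβ, hn⟩
    obtain ⟨a, ha⟩ := Int.eq_ofNat_of_zero_le (peakValue_pos k hε).le
    exact ⟨a, ⟨ε, hε, ha.symm⟩, by omega⟩
  · rintro ⟨a, ⟨ε, hε, ha⟩, hn⟩
    refine ⟨ε, hε, if n = a then 2 else 0, by split_ifs <;> simp, ?_⟩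
    split_ifs <;> omega

theorem summatory_max_on_Jk (k : ℕ) (hk : 1 ≤ k) (n : ℕ)
    (h₁ : 2 ^ (2 * k - 1) - 1 ≤ n) (h₂ : n ≤ 2 ^ (2 * k) - 1) :
    S n ≤ 2 ^ k ∧ (S n = 2 ^ k ↔ IsSpecialForm k (n : ℤ)) := by
  obtain ⟨k, rfl⟩ : ∃ j, k = j + 1 := ⟨k - 1, by omega⟩
  have hpow₁ : 2 ^ (2 * (k + 1) - 1) = 2 * 4 ^ k := by
    rw [show 2 * (k + 1) - 1 = 2 * k + 1 by omega, pow_succ, pow_mul]; ring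
  have hpow₂ : 2 ^ (2 * (k + 1)) = 4 ^ (k + 1) := by rw [pow_mul]; norm_num
  rw [hpow₁] at h₁
  rw [hpow₂] at h₂
  have h4 : 0 < 4 ^ (k + 1) := by positivity
  have h := summatoryBound (k := k) (n := n) (by omega) (by omega)
  refine ⟨h.le, ⟨fun hS => (isSpecialForm_iff k n).2 (h.exists_peak_of_eq hS), fun hn => ?_⟩⟩
  obtain ⟨a, ha, rfl | rfl⟩ := (isSpecialForm_iff k n).1 hn
  exacts [ha.peakProfile.S_eq, ha.peakProfile.S_add_two]
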